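/- Let η : ℝ → ℝ be continuously differentiable with η > 0 on [0,L₁], let u : ℝ² → ℝ² be continuously differentiable, and let φ, v : ℝ² → ℝ² be continuous. Set û = u∘A_η, φ̂ = φ∘A_η, v̂ = v∘A_η. Then ∫_{Ω_η} φ(x)ᵀ · Du(x) · v(x) dλ²(x) = ∫_{Ω̂} φ̂(x̂)ᵀ · ( Dû(x̂)·F(η)(x̂)^{-1} ) · v̂(x̂) · η(x̂₁) dλ²(x̂), where φᵀ·A·v := Σ_{i,j} φ_i A_{ij} v_j. -/

import Mathlib

open MeasureTheory Matrix

/-- The subgraph domain `Ω_η = {(x₁,x₂) : x₁ ∈ (0,L₁), 0 < x₂ < η(x₁)}`. -/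
def subgraph (L₁ : ℝ) (η : ℝ → ℝ) : Set (ℝ × ℝ) :=
  {p : ℝ × ℝ | p.1 ∈ Set.Ioo 0 L₁ ∧ p.2 ∈ Set.Ioo 0 (η p.1)}

/-- The reference domain `Ω̂ = (0,L₁) × (0,1)`. -/
def refDomain (L₁ : ℝ) : Set (ℝ × ℝ) := Set.Ioo 0 L₁ ×ˢ Set.Ioo (0 : ℝ) 1

/-- The ALE map `A_η(x̂₁,x̂₂) = (x̂₁, η(x̂₁)·x̂₂)`. -/
def aleMap (η : ℝ → ℝ) (x : ℝ × ℝ) : ℝ × ℝ := (x.1, η x.1 * x.2)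

/-- The Jacobian matrix `(Du)_{ij} = ∂_j u_i` of a map `u : ℝ² → ℝ²`. -/
noncomputable def jac (u : ℝ × ℝ → ℝ × ℝ) (x : ℝ × ℝ) : Matrix (Fin 2) (Fin 2) ℝ :=
  !![(fderiv ℝ u x (1, 0)).1, (fderiv ℝ u x (0, 1)).1;
     (fderiv ℝ u x (1, 0)).2, (fderiv ℝ u x (0, 1)).2]

/-- The Jacobian `F(η)(x̂)` of the ALE map, with rows `(1,0)` and
`(x̂₂·η′(x̂₁), η(x̂₁))`. -/
noncomputable def matF (η : ℝ → ℝ) (x : ℝ × ℝ) : Matrix (Fin 2) (Fin 2) ℝ :=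
  !![1, 0; x.2 * deriv η x.1, η x.1]

/-- The trilinear contraction `φᵀ · A · v = Σ_{i,j} φ_i A_{ij} v_j`. -/
def vecMatVec (φ : ℝ × ℝ) (A : Matrix (Fin 2) (Fin 2) ℝ) (v : ℝ × ℝ) : ℝ :=
  ![φ.1, φ.2] ⬝ᵥ (A *ᵥ ![v.1, v.2])

noncomputable def aleL (η : ℝ → ℝ) (x : ℝ × ℝ) : (ℝ × ℝ) →L[ℝ] (ℝ × ℝ) :=
  (ContinuousLinearMap.fst ℝ ℝ ℝ).prod
    (η x.1 • ContinuousLinearMap.snd ℝ ℝ ℝ +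
      x.2 • ((deriv η x.1) • ContinuousLinearMap.fst ℝ ℝ ℝ))

lemma aleL_apply (η : ℝ → ℝ) (x a : ℝ × ℝ) :
    aleL η x a = (a.1, η x.1 * a.2 + x.2 * (deriv η x.1 * a.1)) := by
  simp [aleL]

lemma hasFDerivAt_aleMap (η : ℝ → ℝ) (hη : ContDiff ℝ 1 η) (x : ℝ × ℝ) :
    HasFDerivAt (aleMap η) (aleL η x) x := by
  have hηd : HasFDerivAt η ((ContinuousLinearMap.id ℝ ℝ).smulRight (deriv η x.1)) x.1 :=
    (hη.differentiable one_ne_zero x.1).hasDerivAt.hasFDerivAt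
  have h2 := hηd.comp x (hasFDerivAt_fst (p := x))
  have h4 := h2.mul (hasFDerivAt_snd (p := x))
  have heq : (η x.1 • ContinuousLinearMap.snd ℝ ℝ ℝ +
        x.2 • (((ContinuousLinearMap.id ℝ ℝ).smulRight (deriv η x.1)).comp
          (ContinuousLinearMap.fst ℝ ℝ ℝ))) =
      (η x.1 • ContinuousLinearMap.snd ℝ ℝ ℝ +
        x.2 • ((deriv η x.1) • ContinuousLinearMap.fst ℝ ℝ ℝ)) := by
    ext a <;> simp [mul_comm]
  have h5 : HasFDerivAt (fun p : ℝ × ℝ => η p.1 * p.2)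
      (η x.1 • ContinuousLinearMap.snd ℝ ℝ ℝ +
        x.2 • ((deriv η x.1) • ContinuousLinearMap.fst ℝ ℝ ℝ)) x := heq ▸ h4
  exact HasFDerivAt.prodMk (hasFDerivAt_fst (p := x)) h5

lemma det_aleL (η : ℝ → ℝ) (x : ℝ × ℝ) :
    LinearMap.det (aleL η x : (ℝ × ℝ) →ₗ[ℝ] (ℝ × ℝ)) = η x.1 := by
  have h : LinearMap.det (aleL η x : (ℝ × ℝ) →ₗ[ℝ] (ℝ × ℝ)) =
      Matrix.det (LinearMap.toMatrix (Module.Basis.finTwoProd ℝ) (Module.Basis.finTwoProd ℝ)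
        (aleL η x : (ℝ × ℝ) →ₗ[ℝ] (ℝ × ℝ))) := by
    rw [LinearMap.det_toMatrix]
  rw [h, Matrix.det_fin_two]
  simp [LinearMap.toMatrix_apply, aleL]

lemma jac_comp (η : ℝ → ℝ) (hη : ContDiff ℝ 1 η) (u : ℝ × ℝ → ℝ × ℝ)
    (hu : ContDiff ℝ 1 u) (x : ℝ × ℝ) :
    jac (u ∘ aleMap η) x = jac u (aleMap η x) * matF η x := by
  have hA := hasFDerivAt_aleMap η hη x
  have hu' := (hu.differentiable one_ne_zero (aleMap η x)).hasFDerivAt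
  have hc := hu'.comp x hA
  have hf : fderiv ℝ (u ∘ aleMap η) x = (fderiv ℝ u (aleMap η x)).comp (aleL η x) :=
    hc.fderiv
  set D := fderiv ℝ u (aleMap η x) with hD
  set p := x.2 * deriv η x.1 with hp
  have e1 : aleL η x ((1 : ℝ), (0 : ℝ)) = (1, p) := by
    rw [aleL_apply]; simp [hp, mul_comm]
  have e2 : aleL η x ((0 : ℝ), (1 : ℝ)) = (0, η x.1) := by
    rw [aleL_apply]; simp
  have hD1 : D (1, p) = D (1, 0) + p • D (0, 1) := by
    have : ((1 : ℝ), p) = ((1 : ℝ), (0 : ℝ)) + p • ((0 : ℝ), (1 : ℝ)) := by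
      simp [Prod.ext_iff]
    rw [this, map_add, _root_.map_smul]
  have hD2 : D (0, η x.1) = η x.1 • D (0, 1) := by
    have : ((0 : ℝ), η x.1) = η x.1 • ((0 : ℝ), (1 : ℝ)) := by simp [Prod.ext_iff]
    rw [this, _root_.map_smul]
  unfold jac matF
  rw [hf]
  simp only [ContinuousLinearMap.comp_apply, e1, e2, ← hD]
  rw [Matrix.mul_fin_two, hD1, hD2]
  ext i j
  fin_cases i <;> fin_cases j <;> simp <;> ring

lemma image_aleMap (L₁ : ℝ) (η : ℝ → ℝ)
    (hpos : ∀ x₁ ∈ Set.Icc (0 : ℝ) L₁, 0 < η x₁) :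
    aleMap η '' refDomain L₁ = subgraph L₁ η := by
  ext q
  constructor
  · rintro ⟨⟨y₁, t⟩, ⟨hy, ht⟩, rfl⟩
    have hη : 0 < η y₁ := hpos y₁ (Set.mem_Icc_of_Ioo hy)
    refine ⟨hy, mul_pos hη ht.1, ?_⟩
    simpa [aleMap] using (mul_lt_of_lt_one_right hη ht.2)
  · rintro ⟨h1, h2⟩
    have hη : 0 < η q.1 := hpos q.1 (Set.mem_Icc_of_Ioo h1)
    refine ⟨(q.1, q.2 / η q.1), ⟨h1, div_pos h2.1 hη, (div_lt_one hη).2 h2.2⟩, ?_⟩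
    simp [aleMap, mul_div_cancel₀ _ hη.ne']

lemma injOn_aleMap (L₁ : ℝ) (η : ℝ → ℝ)
    (hpos : ∀ x₁ ∈ Set.Icc (0 : ℝ) L₁, 0 < η x₁) :
    Set.InjOn (aleMap η) (refDomain L₁) := by
  rintro ⟨a₁, a₂⟩ ⟨ha, _⟩ ⟨b₁, b₂⟩ hb h
  have h1 : a₁ = b₁ := congrArg Prod.fst h
  subst h1
  have hη : 0 < η a₁ := hpos a₁ (Set.mem_Icc_of_Ioo ha)
  have h2 : η a₁ * a₂ = η a₁ * b₂ := congrArg Prod.snd h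
  exact Prod.ext rfl (mul_left_cancel₀ hη.ne' h2)


/-- Transformation of the convective-type trilinear term onto the
reference domain: `∫_{Ω_η} φᵀ · Du · v dx = ∫_{Ω̂} φ̂ᵀ · (Dû F(η)⁻¹) · v̂ · η dx̂`
(cf. the identity for the convective term in the proof of Lemma \ref{Lwfref}). -/
theorem convective_term_on_reference_domain
    (L₁ : ℝ) (hL : 0 < L₁)
    (η : ℝ → ℝ) (hη : ContDiff ℝ 1 η) (hpos : ∀ x₁ ∈ Set.Icc (0 : ℝ) L₁, 0 < η x₁)
    (u : ℝ × ℝ → ℝ × ℝ) (hu : ContDiff ℝ 1 u)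
    (φ v : ℝ × ℝ → ℝ × ℝ) (hφ : Continuous φ) (hv : Continuous v) :
    ∫ x in subgraph L₁ η, vecMatVec (φ x) (jac u x) (v x)
      = ∫ xh in refDomain L₁,
          vecMatVec (φ (aleMap η xh)) (jac (u ∘ aleMap η) xh * (matF η xh)⁻¹)
              (v (aleMap η xh))
            * η xh.1 := by
  have hmeas : MeasurableSet (refDomain L₁) :=
    (isOpen_Ioo.prod isOpen_Ioo).measurableSet
  rw [← image_aleMap L₁ η hpos,
    integral_image_eq_integral_abs_det_fderiv_smul volume hmeas
      (fun x _ => (hasFDerivAt_aleMap η hη x).hasFDerivWithinAt)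
      (injOn_aleMap L₁ η hpos)]
  refine setIntegral_congr_fun hmeas fun x hx => ?_
  have hη0 : 0 < η x.1 := hpos x.1 (Set.mem_Icc_of_Ioo hx.1)
  have hdet : (aleL η x).det = η x.1 := det_aleL η x
  have hF : jac (u ∘ aleMap η) x * (matF η x)⁻¹ = jac u (aleMap η x) := by
    rw [jac_comp η hη u hu x, Matrix.mul_assoc, Matrix.mul_nonsing_inv, Matrix.mul_one]
    have : (matF η x).det = η x.1 := by simp [matF, Matrix.det_fin_two_of]
    rw [this]; exact hη0.ne'.isUnit
  rw [hF, hdet, abs_of_pos hη0, smul_eq_mul, mul_comm]
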